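/- arXiv:2604.06072 — 2 statements merged into one kernel-verified Lean document; each statement's English description precedes it below -/
import Mathlib

section
/- Let V ⊆ B(H) ⊗ N be a quantum multi-relation on a pair of finite-dimensional algebras (M, N), with M and N minimally represented. Then the quantum multi-adjacency operator A_{P_V} : M ⊗ N → M ⊗ N, the weighted adjacency operator A_{S_V} : M → M, and the adjacency operator A_{P_Ṽ} : M → M of the underlying single-edged graph are all completely positive maps. Moreover, A_{P_V} and A_{P_Ṽ} satisfy the Schur idempotent condition: m(A_{P_V} ⊗ A_{P_V})m* = A_{P_V} and m(A_{P_Ṽ} ⊗ A_{P_Ṽ})m* = A_{P_Ṽ}, where m denotes the multiplication map L² ⊗ L² → L² of the relevant algebra (M ⊗ N, respectively M) and m* its Hilbert-space adjoint. -/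
/-!
STATEMENT 16: Let `V ⊆ B(H) ⊗ N` be a quantum multi-relation on a pair of
finite-dimensional algebras `(M, N)`, with `M` and `N` minimally represented
(realized as the multimatrix algebras `M = ⊕_a B(ℂ^{da a})`, `N = ⊕_b B(ℂ^{db b})`
acting block-diagonally, which are exactly the minimal representations).  Then the
quantum multi-adjacency operator `A_{P_V} : M ⊗ N → M ⊗ N`, the weighted adjacency
operator `A_{S_V} : M → M` and the adjacency operator `A_{P_Ṽ} : M → M` of the
underlying single-edged graph `Ṽ = (id ⊗ tr_K)(V)` are all completely positive maps;
moreover `A_{P_V}` and `A_{P_Ṽ}` satisfy the Schur idempotent condition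
`m (A ⊗ A) m* = A` (as operators on the `L²`-spaces; `m` the multiplication map).

The multi-edge indicator `P_V` and the edge indicator `P_Ṽ` are hypothesized through
their characterizing properties (membership in the 4-leg resp. 2-leg faithful
representation of `M⊗M^op⊗N⊗N^op` resp. `M⊗M^op`, and Weaver actions the
Hilbert–Schmidt-orthogonal projections onto `V` resp. `Ṽ`); the adjacency operators
are extracted by the entry formulas `APmat`, `ASmat`, and all `L²`-space operators
are expressed in the coordinates given by the matrix-unit bases.
-/

open scoped Kronecker Matrix ComplexOrder

namespace Stmt16

abbrev PiMat (ι : Type) (d : ι → Type) [∀ i, Fintype (d i)] : Type _ :=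
  ∀ i, Matrix (d i) (d i) ℂ

def toBig {k d : Type} (X : Matrix k k (Matrix d d ℂ)) : Matrix (k × d) (k × d) ℂ :=
  Matrix.of fun p q => X p.1 q.1 p.2 q.2

/-- Complete positivity of a linear map between multimatrix algebras. -/
def IsCP {ι : Type} [Fintype ι] [DecidableEq ι] {d : ι → Type} [∀ i, Fintype (d i)]
    [∀ i, DecidableEq (d i)] {κ : Type} [Fintype κ] [DecidableEq κ] {e : κ → Type}
    [∀ i, Fintype (e i)] [∀ i, DecidableEq (e i)] (Φ : PiMat ι d →ₗ[ℂ] PiMat κ e) :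
    Prop :=
  ∀ (n : ℕ) (X : Matrix (Fin n) (Fin n) (PiMat ι d)),
    (toBig (X.map (Matrix.blockDiagonal' (α := ℂ)))).PosSemidef →
    (toBig ((X.map ⇑Φ).map (Matrix.blockDiagonal' (α := ℂ)))).PosSemidef

/-- A multimatrix algebra in its Hilbert–Schmidt (matrix-unit) coordinates. -/
noncomputable def vecEquiv (ι : Type) (d : ι → Type) [∀ i, Fintype (d i)] :
    PiMat ι d ≃ₗ[ℂ] ((Σ i, d i × d i) → ℂ) where
  toFun x p := x p.1 p.2.1 p.2.2
  invFun g i a b := g ⟨i, (a, b)⟩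
  map_add' _ _ := rfl
  map_smul' _ _ := rfl
  left_inv _ := rfl
  right_inv _ := rfl

/-- The linear map on a multimatrix algebra determined by a matrix in the
Hilbert–Schmidt coordinates. -/
noncomputable def matOp {ι : Type} [Fintype ι] [DecidableEq ι] {d : ι → Type} [∀ i, Fintype (d i)] [∀ i, DecidableEq (d i)]
    (A : Matrix (Σ i, d i × d i) (Σ i, d i × d i) ℂ) : PiMat ι d →ₗ[ℂ] PiMat ι d :=
  ((vecEquiv ι d).symm.toLinearMap.comp A.mulVecLin).comp (vecEquiv ι d).toLinearMap

/-- The multiplication map `m : L²(A) ⊗ L²(A) → L²(A)` of a multimatrix algebra, in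
Hilbert–Schmidt coordinates. -/
noncomputable def mulMat (ι : Type) (d : ι → Type) [∀ i, Fintype (d i)]
    [DecidableEq ι] [∀ i, DecidableEq (d i)] :
    Matrix (Σ i, d i × d i) ((Σ i, d i × d i) × Σ i, d i × d i) ℂ :=
  Matrix.of fun r c =>
    if h₁ : c.1.1 = r.1 then
      if h₂ : c.2.1 = r.1 then
        if cast (congrArg d h₁) c.1.2.1 = r.2.1 ∧
            cast (congrArg d h₁) c.1.2.2 = cast (congrArg d h₂) c.2.2.1 ∧
            cast (congrArg d h₂) c.2.2.2 = r.2.2 then 1 else 0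
      else 0
    else 0

variable {ιa ιb : Type} [Fintype ιa] [DecidableEq ιa] [Fintype ιb] [DecidableEq ιb]
  {da : ιa → Type} [∀ a, Fintype (da a)] [∀ a, DecidableEq (da a)]
  {db : ιb → Type} [∀ b, Fintype (db b)] [∀ b, DecidableEq (db b)]

def BHN : Set (Matrix ((Σ a, da a) × Σ b, db b) ((Σ a, da a) × Σ b, db b) ℂ) :=
  ↑(Submodule.span ℂ
      {T | ∃ (A : Matrix (Σ a, da a) (Σ a, da a) ℂ) (y : PiMat ιb db),
        T = A ⊗ₖ Matrix.blockDiagonal' y})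

/-- Quantum multi-relation on `(M, N)` in the block-diagonal realization. -/
def IsQMR (V : Submodule ℂ (Matrix ((Σ a, da a) × Σ b, db b)
    ((Σ a, da a) × Σ b, db b) ℂ)) : Prop :=
  (∀ T ∈ V, T ∈ BHN (da := da) (db := db)) ∧
  (∀ A : Matrix (Σ a, da a) (Σ a, da a) ℂ,
    (∀ x : PiMat ιa da, A * Matrix.blockDiagonal' x = Matrix.blockDiagonal' x * A) →
    ∀ T ∈ V, (A ⊗ₖ (1 : Matrix (Σ b, db b) (Σ b, db b) ℂ)) * T ∈ V ∧
      T * (A ⊗ₖ (1 : Matrix (Σ b, db b) (Σ b, db b) ℂ)) ∈ V) ∧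
  (∀ c : ιb → ℂ, ∀ T ∈ V,
    ((1 : Matrix (Σ a, da a) (Σ a, da a) ℂ) ⊗ₖ
      Matrix.blockDiagonal' (fun b => c b • (1 : Matrix (db b) (db b) ℂ))) * T ∈ V)

/-- The 4-leg faithful representation of `M ⊗ M^op ⊗ N ⊗ N^op`. -/
def MMNN : Set (Matrix (((Σ a, da a) × Σ a, da a) × (Σ b, db b) × Σ b, db b)
    (((Σ a, da a) × Σ a, da a) × (Σ b, db b) × Σ b, db b) ℂ) :=
  ↑(Submodule.span ℂ
      {X | ∃ m₁ m₂ : PiMat ιa da, ∃ n₁ n₂ : PiMat ιb db,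
        X = (Matrix.blockDiagonal' m₁ ⊗ₖ (Matrix.blockDiagonal' m₂)ᵀ) ⊗ₖ
            (Matrix.blockDiagonal' n₁ ⊗ₖ (Matrix.blockDiagonal' n₂)ᵀ)})

/-- The 2-leg faithful representation of `M ⊗ M^op`. -/
def MM : Set (Matrix ((Σ a, da a) × Σ a, da a) ((Σ a, da a) × Σ a, da a) ℂ) :=
  ↑(Submodule.span ℂ
      {X | ∃ m₁ m₂ : PiMat ιa da,
        X = Matrix.blockDiagonal' m₁ ⊗ₖ (Matrix.blockDiagonal' m₂)ᵀ})

noncomputable def weaver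
    (P : Matrix (((Σ a, da a) × Σ a, da a) × (Σ b, db b) × Σ b, db b)
      (((Σ a, da a) × Σ a, da a) × (Σ b, db b) × Σ b, db b) ℂ)
    (S : Matrix ((Σ a, da a) × Σ b, db b) ((Σ a, da a) × Σ b, db b) ℂ) :
    Matrix ((Σ a, da a) × Σ b, db b) ((Σ a, da a) × Σ b, db b) ℂ :=
  Matrix.of fun r c =>
    ∑ a : Σ a, da a, ∑ b : Σ a, da a, ∑ u : Σ b, db b, ∑ v : Σ b, db b,
      P ((r.1, c.1), (r.2, c.2)) ((a, b), (u, v)) * S (a, u) (b, v)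

noncomputable def weaver2
    (Q : Matrix ((Σ a, da a) × Σ a, da a) ((Σ a, da a) × Σ a, da a) ℂ)
    (S : Matrix (Σ a, da a) (Σ a, da a) ℂ) : Matrix (Σ a, da a) (Σ a, da a) ℂ :=
  Matrix.of fun r c => ∑ a : Σ a, da a, ∑ b : Σ a, da a, Q (r, c) (a, b) * S a b

noncomputable def hsInner {d : Type} [Fintype d] (A B : Matrix d d ℂ) : ℂ :=
  (Aᴴ * B).trace

/-- The partial trace `id ⊗ tr_K : B(H) ⊗ N → B(H)`. -/
noncomputable def ptrK
    (T : Matrix ((Σ a, da a) × Σ b, db b) ((Σ a, da a) × Σ b, db b) ℂ) :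
    Matrix (Σ a, da a) (Σ a, da a) ℂ :=
  Matrix.of fun x x' => ∑ u : Σ b, db b, T (x, u) (x', u)

/-- `S_V = (id⊗id⊗tr_K)((id⊗id⊗m)(P_V))`. -/
noncomputable def sVmat
    (P : Matrix (((Σ a, da a) × Σ a, da a) × (Σ b, db b) × Σ b, db b)
      (((Σ a, da a) × Σ a, da a) × (Σ b, db b) × Σ b, db b) ℂ) :
    Matrix ((Σ a, da a) × Σ a, da a) ((Σ a, da a) × Σ a, da a) ℂ :=
  Matrix.of fun r c => ∑ u : Σ b, db b, ∑ v : Σ b, db b, P (r, (u, u)) (c, (v, v))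

/-- The multi-adjacency operator `A_{P_V}(m⊗n) = (tr⊗id⊗tr⊗id)(P_V (m⊗1⊗n⊗1))`, as a
matrix in the Hilbert–Schmidt coordinates of `M ⊗ N = ⊕_{(a,b)} B(ℂ^{da a} ⊗ ℂ^{db b})`. -/
noncomputable def APmat
    (P : Matrix (((Σ a, da a) × Σ a, da a) × (Σ b, db b) × Σ b, db b)
      (((Σ a, da a) × Σ a, da a) × (Σ b, db b) × Σ b, db b) ℂ) :
    Matrix (Σ p : ιa × ιb, (da p.1 × db p.2) × (da p.1 × db p.2))
      (Σ p : ιa × ιb, (da p.1 × db p.2) × (da p.1 × db p.2)) ℂ :=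
  Matrix.of fun r c =>
    P ((⟨c.1.1, c.2.2.1⟩, ⟨r.1.1, r.2.2.1⟩), (⟨c.1.2, c.2.2.2⟩, ⟨r.1.2, r.2.2.2⟩))
      ((⟨c.1.1, c.2.1.1⟩, ⟨r.1.1, r.2.1.1⟩), (⟨c.1.2, c.2.1.2⟩, ⟨r.1.2, r.2.1.2⟩))

/-- An adjacency operator `A_S(m) = (tr⊗id)(S (m⊗1))` on `M`, as a matrix in the
Hilbert–Schmidt coordinates of `M`. -/
noncomputable def ASmat
    (S : Matrix ((Σ a, da a) × Σ a, da a) ((Σ a, da a) × Σ a, da a) ℂ) :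
    Matrix (Σ a, da a × da a) (Σ a, da a × da a) ℂ :=
  Matrix.of fun r c =>
    S ((⟨c.1, c.2.2⟩ : Σ a, da a), (⟨r.1, r.2.2⟩ : Σ a, da a))
      ((⟨c.1, c.2.1⟩ : Σ a, da a), (⟨r.1, r.2.1⟩ : Σ a, da a))

section Aux

lemma sum_sigma_univ {κ : Type} [Fintype κ] {δ : κ → Type} [∀ k, Fintype (δ k)] {M : Type}
    [AddCommMonoid M] (F : (Σ k, δ k) → M) :
    ∑ x : Σ k, δ k, F x = ∑ k, ∑ y : δ k, F ⟨k, y⟩ := by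
  rw [← Finset.univ_sigma_univ, Finset.sum_sigma]

variable {ι : Type} [Fintype ι] [DecidableEq ι] {d : ι → Type} [∀ i, Fintype (d i)]
  [∀ i, DecidableEq (d i)] {E : Type} [Fintype E] [DecidableEq E]

/-- The linear map on the multimatrix algebra with "Choi matrix" `R`. -/
noncomputable def chmat (f : (Σ i, d i) → E) (R : Matrix (E × E) (E × E) ℂ) :
    Matrix (Σ i, d i × d i) (Σ i, d i × d i) ℂ :=
  Matrix.of fun r c => R (f ⟨c.1, c.2.2⟩, f ⟨r.1, r.2.2⟩) (f ⟨c.1, c.2.1⟩, f ⟨r.1, r.2.1⟩)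

lemma matOp_apply (A : Matrix (Σ i, d i × d i) (Σ i, d i × d i) ℂ) (x : PiMat ι d)
    (a : ι) (s t : d a) :
    matOp A x a s t = ∑ c : Σ i, d i × d i, A ⟨a, (s, t)⟩ c * x c.1 c.2.1 c.2.2 := by
  simp [matOp, vecEquiv, Matrix.mulVec, dotProduct]
  rfl

theorem isCP_chmat (f : (Σ i, d i) → E) (β : E → ι) (hβ : ∀ c : Σ i, d i, β (f c) = c.1)
    (R : Matrix (E × E) (E × E) ℂ) (hR : R.PosSemidef)
    (hblk : ∀ u u' v v' : E, β u ≠ β v ∨ β u' ≠ β v' → R (u, u') (v, v') = 0) :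
    IsCP (matOp (chmat f R)) := by
  intro n X hX
  obtain ⟨W, hW⟩ : ∃ B, _ = Bᴴ * B := by
    open scoped MatrixOrder in
    obtain ⟨B, hB⟩ := CStarAlgebra.nonneg_iff_eq_star_mul_self.mp hR.nonneg
    exact ⟨B, hB⟩
  obtain ⟨Y, hY⟩ : ∃ B, _ = Bᴴ * B := by
    open scoped MatrixOrder in
    obtain ⟨B, hB⟩ := CStarAlgebra.nonneg_iff_eq_star_mul_self.mp hX.nonneg
    exact ⟨B, hB⟩
  have hBe : ∀ (i j : Fin n) (qk ql : Σ i, d i),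
      toBig (Matrix.map X (Matrix.blockDiagonal' (α := ℂ))) (i, qk) (j, ql) =
        Matrix.blockDiagonal' (X i j) qk ql := fun _ _ _ _ => rfl
  set C : Matrix ((E × E) × (Fin n × Σ i, d i)) (Fin n × Σ i, d i) ℂ :=
    Matrix.of (fun mr iα => ∑ qk : Σ i, d i, star (W mr.1 (f qk, f iα.2)) * Y mr.2 (iα.1, qk))
    with hC
  have key : toBig (Matrix.map (Matrix.map X ⇑(matOp (chmat f R)))
      (Matrix.blockDiagonal' (α := ℂ))) = Cᴴ * C := by
    ext x z
    obtain ⟨i, a, s⟩ := x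
    obtain ⟨j, b, t⟩ := z
    have hmid : (Cᴴ * C) (i, ⟨a, s⟩) (j, ⟨b, t⟩) =
        ∑ qk : Σ i, d i, ∑ ql : Σ i, d i,
          R (f ql, f ⟨b, t⟩) (f qk, f ⟨a, s⟩) *
            toBig (Matrix.map X (Matrix.blockDiagonal' (α := ℂ))) (i, qk) (j, ql) := by
      calc (Cᴴ * C) (i, ⟨a, s⟩) (j, ⟨b, t⟩)
          = ∑ mr : (E × E) × (Fin n × Σ i, d i), ∑ qk : Σ i, d i, ∑ ql : Σ i, d i,
            (W mr.1 (f qk, f ⟨a, s⟩) * star (Y mr.2 (i, qk))) *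
              (star (W mr.1 (f ql, f ⟨b, t⟩)) * Y mr.2 (j, ql)) := by
            rw [Matrix.mul_apply]
            refine Finset.sum_congr rfl fun mr _ => ?_
            rw [Matrix.conjTranspose_apply]
            simp only [hC, Matrix.of_apply, star_sum, star_mul', star_star]
            rw [Finset.sum_mul_sum]
        _ = ∑ qk : Σ i, d i, ∑ ql : Σ i, d i, ∑ mr : (E × E) × (Fin n × Σ i, d i),
            (W mr.1 (f qk, f ⟨a, s⟩) * star (Y mr.2 (i, qk))) *
              (star (W mr.1 (f ql, f ⟨b, t⟩)) * Y mr.2 (j, ql)) := by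
            rw [Finset.sum_comm]
            exact Finset.sum_congr rfl fun qk _ => Finset.sum_comm
        _ = ∑ qk : Σ i, d i, ∑ ql : Σ i, d i,
            (∑ m : E × E, star (W m (f ql, f ⟨b, t⟩)) * W m (f qk, f ⟨a, s⟩)) *
              (∑ r, star (Y r (i, qk)) * Y r (j, ql)) := by
            refine Finset.sum_congr rfl fun qk _ => Finset.sum_congr rfl fun ql _ => ?_
            rw [Fintype.sum_prod_type, Finset.sum_mul_sum]
            exact Finset.sum_congr rfl fun m _ => Finset.sum_congr rfl fun r _ => by ring
        _ = _ := by
            refine Finset.sum_congr rfl fun qk _ => Finset.sum_congr rfl fun ql _ => ?_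
            rw [hW, hY]
            simp [Matrix.mul_apply, Matrix.conjTranspose_apply]
    rw [hmid]
    show Matrix.blockDiagonal' (matOp (chmat f R) (X i j)) ⟨a, s⟩ ⟨b, t⟩ = _
    by_cases hab : a = b
    · subst hab
      rw [Matrix.blockDiagonal'_apply_eq, matOp_apply]
      simp only [sum_sigma_univ (δ := fun i => d i × d i), sum_sigma_univ (δ := d),
        Fintype.sum_prod_type]
      refine Finset.sum_congr rfl fun q _ => Finset.sum_congr rfl fun k _ => ?_
      refine Eq.trans ?_ (Finset.sum_eq_single q ?_ ?_).symm
      · refine Finset.sum_congr rfl fun l _ => ?_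
        rw [hBe, Matrix.blockDiagonal'_apply_eq]
        rfl
      · intro q' _ hq'
        exact Finset.sum_eq_zero fun l _ => by
          rw [hBe, Matrix.blockDiagonal'_apply_ne _ _ _ (Ne.symm hq'), mul_zero]
      · intro h; exact absurd (Finset.mem_univ q) h
    · rw [Matrix.blockDiagonal'_apply_ne _ _ _ hab]
      symm
      apply Finset.sum_eq_zero; rintro ⟨q, k⟩ _
      apply Finset.sum_eq_zero; rintro ⟨q', l⟩ _
      rw [hblk _ _ _ _ (Or.inr (by rw [hβ, hβ]; exact Ne.symm hab)), zero_mul]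
  rw [key]
  exact Matrix.posSemidef_conjTranspose_mul_self C

end Aux
section Aux2

open scoped ComplexOrder

lemma star_pi_single {κ : Type} [DecidableEq κ] (a : κ) :
    star (Pi.single a (1 : ℂ) : κ → ℂ) = Pi.single a 1 := by
  funext k
  by_cases h : k = a <;> simp [Pi.single_apply, h]

theorem proj_facts {κ : Type} [Fintype κ] [DecidableEq κ] (p : Matrix κ κ ℂ)
    (Vs : Submodule ℂ (κ → ℂ))
    (h1 : ∀ g, p.mulVec g ∈ Vs)
    (h2 : ∀ g, ∀ t ∈ Vs, star (g - p.mulVec g) ⬝ᵥ t = 0) :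
    p * p = p ∧ pᴴ = p := by
  constructor
  · have hfix : ∀ g, p.mulVec (p.mulVec g) = p.mulVec g := by
      intro g
      have hd : p.mulVec g - p.mulVec (p.mulVec g) ∈ Vs := sub_mem (h1 g) (h1 _)
      have h0 := h2 (p.mulVec g) _ hd
      have hz := dotProduct_star_self_eq_zero.mp h0
      have := sub_eq_zero.mp hz
      exact this.symm
    ext a b
    have := congrFun (hfix (Pi.single b 1)) a
    rw [Matrix.mulVec_mulVec] at this
    simpa using this
  · have key : ∀ g h, star (p.mulVec g) ⬝ᵥ h = star g ⬝ᵥ p.mulVec h := by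
      intro g h
      have e1 : star (g - p.mulVec g) ⬝ᵥ p.mulVec h = 0 := h2 g _ (h1 h)
      have e2 : star (h - p.mulVec h) ⬝ᵥ p.mulVec g = 0 := h2 h _ (h1 g)
      have e2' : star (p.mulVec g) ⬝ᵥ (h - p.mulVec h) = 0 := by
        rw [Matrix.star_dotProduct, e2, star_zero]
      have l1 : star (p.mulVec g) ⬝ᵥ h = star (p.mulVec g) ⬝ᵥ p.mulVec h := by
        have := e2'
        rw [dotProduct_sub] at this
        linear_combination this
      have l2 : star g ⬝ᵥ p.mulVec h = star (p.mulVec g) ⬝ᵥ p.mulVec h := by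
        have := e1
        rw [star_sub, sub_dotProduct] at this
        linear_combination this
      rw [l1, l2]
    ext a b
    have := key (Pi.single a 1) (Pi.single b 1)
    rw [star_pi_single, single_dotProduct] at this
    rw [dotProduct_single] at this
    simp only [Matrix.mulVec_single, mul_one, one_mul] at this
    simpa [Matrix.conjTranspose_apply] using this

end Aux2

section Aux3

variable {ι : Type} [Fintype ι] [DecidableEq ι] {d : ι → Type} [∀ i, Fintype (d i)]
  [∀ i, DecidableEq (d i)] {E : Type} [Fintype E] [DecidableEq E]

lemma mulMat_apply_ne₁ {r c1 c2 : Σ i, d i × d i} (h : c1.1 ≠ r.1) :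
    mulMat ι d r (c1, c2) = 0 := by
  simp [mulMat, h]

lemma mulMat_apply_ne₂ {r c1 c2 : Σ i, d i × d i} (h : c2.1 ≠ r.1) :
    mulMat ι d r (c1, c2) = 0 := by
  simp [mulMat, h]

lemma mulMat_apply_same (i : ι) (x y a b a' b' : d i) :
    mulMat ι d ⟨i, (x, y)⟩ (⟨i, (a, b)⟩, ⟨i, (a', b')⟩)
      = if a = x ∧ b = a' ∧ b' = y then 1 else 0 := by
  simp [mulMat]

lemma mulMat_star (r : Σ i, d i × d i) (c : (Σ i, d i × d i) × Σ i, d i × d i) :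
    star (mulMat ι d r c) = mulMat ι d r c := by
  simp only [mulMat, Matrix.of_apply]
  split_ifs <;> simp

lemma mulMat_rowsum (r : Σ i, d i × d i) (g : (Σ i, d i × d i) × (Σ i, d i × d i) → ℂ) :
    ∑ c : (Σ i, d i × d i) × (Σ i, d i × d i), mulMat ι d r c * g c
      = ∑ w : d r.1, g (⟨r.1, (r.2.1, w)⟩, ⟨r.1, (w, r.2.2)⟩) := by
  obtain ⟨i, x, y⟩ := r
  rw [Fintype.sum_prod_type]
  simp only [sum_sigma_univ (δ := fun i => d i × d i)]
  rw [Finset.sum_eq_single i]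
  rotate_left
  · intro j _ hj
    apply Finset.sum_eq_zero; intro ab _
    apply Finset.sum_eq_zero; intro j2 _
    apply Finset.sum_eq_zero; intro ab2 _
    rw [mulMat_apply_ne₁ hj, zero_mul]
  · intro h; exact absurd (Finset.mem_univ i) h
  refine Eq.trans (Finset.sum_congr rfl fun ab1 _ => Finset.sum_eq_single i ?_ ?_) ?_
  · intro j2 _ hj2
    apply Finset.sum_eq_zero; intro ab2 _
    rw [mulMat_apply_ne₂ hj2, zero_mul]
  · intro h; exact absurd (Finset.mem_univ i) h
  simp only [Fintype.sum_prod_type, mulMat_apply_same, ite_and, ite_mul, one_mul, zero_mul,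
    Finset.sum_ite_irrel, Finset.sum_const_zero, Finset.sum_ite_eq, Finset.sum_ite_eq',
    Finset.mem_univ, if_true]

end Aux3
section Aux4

variable {ι : Type} [Fintype ι] [DecidableEq ι] {d : ι → Type} [∀ i, Fintype (d i)]
  [∀ i, DecidableEq (d i)] {E : Type} [Fintype E] [DecidableEq E]

theorem schur_chmat (f : (Σ i, d i) → E) (hf : Function.Bijective f) (β : E → ι)
    (hβ : ∀ c : Σ i, d i, β (f c) = c.1)
    (R : Matrix (E × E) (E × E) ℂ)
    (hblk : ∀ u u' v v' : E, β u ≠ β v ∨ β u' ≠ β v' → R (u, u') (v, v') = 0)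
    (hR2 : R * R = R) :
    mulMat ι d * (chmat f R ⊗ₖ chmat f R) * (mulMat ι d)ᴴ = chmat f R := by
  ext r r'
  have lhs1 : (mulMat ι d * (chmat f R ⊗ₖ chmat f R) * (mulMat ι d)ᴴ) r r'
      = ∑ c, mulMat ι d r c * (∑ c', mulMat ι d r' c' * (chmat f R ⊗ₖ chmat f R) c c') := by
    rw [Matrix.mul_apply]
    calc ∑ c', (mulMat ι d * (chmat f R ⊗ₖ chmat f R)) r c' * (mulMat ι d)ᴴ c' r'
        = ∑ c', ∑ c, mulMat ι d r c * (mulMat ι d r' c' * (chmat f R ⊗ₖ chmat f R) c c') := by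
          refine Finset.sum_congr rfl fun c' _ => ?_
          rw [Matrix.mul_apply, Matrix.conjTranspose_apply, mulMat_star, Finset.sum_mul]
          exact Finset.sum_congr rfl fun c _ => by ring
      _ = ∑ c, ∑ c', mulMat ι d r c * (mulMat ι d r' c' * (chmat f R ⊗ₖ chmat f R) c c') :=
          Finset.sum_comm
      _ = _ := Finset.sum_congr rfl fun c _ => (Finset.mul_sum _ _ _).symm
  rw [lhs1, mulMat_rowsum]
  have step : ∀ w : d r.1, (∑ c', mulMat ι d r' c' *
        (chmat f R ⊗ₖ chmat f R) (⟨r.1, (r.2.1, w)⟩, ⟨r.1, (w, r.2.2)⟩) c')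
      = ∑ w' : d r'.1, (chmat f R ⊗ₖ chmat f R) (⟨r.1, (r.2.1, w)⟩, ⟨r.1, (w, r.2.2)⟩)
          (⟨r'.1, (r'.2.1, w')⟩, ⟨r'.1, (w', r'.2.2)⟩) :=
    fun w => mulMat_rowsum r' _
  simp only [step]
  obtain ⟨i, x, y⟩ := r
  obtain ⟨j, p, q⟩ := r'
  have key : R (f ⟨j, q⟩, f ⟨i, y⟩) (f ⟨j, p⟩, f ⟨i, x⟩)
      = ∑ w : d i, ∑ w' : d j,
          R (f ⟨j, w'⟩, f ⟨i, w⟩) (f ⟨j, p⟩, f ⟨i, x⟩) *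
            R (f ⟨j, q⟩, f ⟨i, y⟩) (f ⟨j, w'⟩, f ⟨i, w⟩) := by
    conv_lhs => rw [← hR2]
    rw [Matrix.mul_apply,
      ← Equiv.sum_comp ((Equiv.ofBijective f hf).prodCongr (Equiv.ofBijective f hf)),
      Fintype.sum_prod_type]
    simp only [Equiv.prodCongr_apply, Equiv.ofBijective_apply, Prod.map]
    simp only [sum_sigma_univ (δ := d)]
    rw [Finset.sum_eq_single j]
    rotate_left
    · intro j' _ hj'
      apply Finset.sum_eq_zero; intro w' _
      apply Finset.sum_eq_zero; intro i' _
      apply Finset.sum_eq_zero; intro w _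
      rw [hblk _ _ _ _ (Or.inl (by rw [hβ, hβ]; exact Ne.symm hj')), zero_mul]
    · intro h; exact absurd (Finset.mem_univ j) h
    refine Eq.trans (Finset.sum_congr rfl fun w' _ => Finset.sum_eq_single i ?_ ?_) ?_
    · intro i' _ hi'
      apply Finset.sum_eq_zero; intro w _
      rw [hblk _ _ _ _ (Or.inr (by rw [hβ, hβ]; exact Ne.symm hi')), zero_mul]
    · intro h; exact absurd (Finset.mem_univ i) h
    rw [Finset.sum_comm]
    exact Finset.sum_congr rfl fun w _ => Finset.sum_congr rfl fun w' _ => by ring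
  simp only [Matrix.kroneckerMap_apply, chmat, Matrix.of_apply]
  exact key.symm

end Aux4
section Aux5

open scoped ComplexOrder

/-- Vectorization of matrices, as a linear map. -/
noncomputable def vecM {κ : Type} : Matrix κ κ ℂ →ₗ[ℂ] (κ × κ → ℂ) where
  toFun S := fun rc => S rc.1 rc.2
  map_add' _ _ := rfl
  map_smul' _ _ := rfl

lemma hsInner_eq_dot {κ : Type} [Fintype κ] (A B : Matrix κ κ ℂ) :
    hsInner A B = star (vecM A) ⬝ᵥ vecM B := by
  simp only [hsInner, Matrix.trace, Matrix.diag, Matrix.mul_apply,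
    Matrix.conjTranspose_apply, dotProduct, vecM, LinearMap.coe_mk, AddHom.coe_mk,
    Pi.star_apply, Fintype.sum_prod_type]
  exact Finset.sum_comm

variable {ιa ιb : Type} [Fintype ιa] [DecidableEq ιa] [Fintype ιb] [DecidableEq ιb]
  {da : ιa → Type} [∀ a, Fintype (da a)] [∀ a, DecidableEq (da a)]
  {db : ιb → Type} [∀ b, Fintype (db b)] [∀ b, DecidableEq (db b)]

/-- Reindexing of the 4-leg representation into a matrix over `(H⊗K) ⊗ (H⊗K)`. -/
noncomputable def reidx
    (P : Matrix (((Σ a, da a) × Σ a, da a) × (Σ b, db b) × Σ b, db b)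
      (((Σ a, da a) × Σ a, da a) × (Σ b, db b) × Σ b, db b) ℂ) :
    Matrix ((((Σ a, da a) × Σ b, db b)) × ((Σ a, da a) × Σ b, db b))
      ((((Σ a, da a) × Σ b, db b)) × ((Σ a, da a) × Σ b, db b)) ℂ :=
  Matrix.of fun α γ => P ((α.1.1, α.2.1), (α.1.2, α.2.2)) ((γ.1.1, γ.2.1), (γ.1.2, γ.2.2))

lemma weaver_eq_mulVec
    (P : Matrix (((Σ a, da a) × Σ a, da a) × (Σ b, db b) × Σ b, db b)
      (((Σ a, da a) × Σ a, da a) × (Σ b, db b) × Σ b, db b) ℂ)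
    (S : Matrix ((Σ a, da a) × Σ b, db b) ((Σ a, da a) × Σ b, db b) ℂ) :
    vecM (weaver P S) = (reidx P).mulVec (vecM S) := by
  funext rc
  obtain ⟨r, c⟩ := rc
  show weaver P S r c = _
  simp only [Matrix.mulVec, dotProduct, reidx, vecM, weaver, Matrix.of_apply,
    LinearMap.coe_mk, AddHom.coe_mk, Fintype.sum_prod_type]
  exact Finset.sum_congr rfl fun a _ => Finset.sum_comm

lemma weaver2_eq_mulVec
    (Q : Matrix ((Σ a, da a) × Σ a, da a) ((Σ a, da a) × Σ a, da a) ℂ)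
    (S : Matrix (Σ a, da a) (Σ a, da a) ℂ) :
    vecM (weaver2 Q S) = Q.mulVec (vecM S) := by
  funext rc
  obtain ⟨r, c⟩ := rc
  show weaver2 Q S r c = _
  simp only [Matrix.mulVec, dotProduct, vecM, weaver2, Matrix.of_apply,
    LinearMap.coe_mk, AddHom.coe_mk, Fintype.sum_prod_type]
  rfl

/-- The partial trace as a linear map. -/
noncomputable def ptrKL :
    Matrix ((Σ a, da a) × Σ b, db b) ((Σ a, da a) × Σ b, db b) ℂ →ₗ[ℂ]
      Matrix (Σ a, da a) (Σ a, da a) ℂ where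
  toFun := ptrK
  map_add' T T' := by
    ext x x'
    simp [ptrK, Finset.sum_add_distrib]
  map_smul' c T := by
    ext x x'
    simp [ptrK, Finset.mul_sum]

lemma MMNN_struct
    {P : Matrix (((Σ a, da a) × Σ a, da a) × (Σ b, db b) × Σ b, db b)
      (((Σ a, da a) × Σ a, da a) × (Σ b, db b) × Σ b, db b) ℂ}
    (hP : P ∈ MMNN (da := da) (db := db)) :
    ∀ (A C A' C' : Σ a, da a) (B D B' D' : Σ b, db b),
      A.1 ≠ A'.1 ∨ C.1 ≠ C'.1 ∨ B.1 ≠ B'.1 ∨ D.1 ≠ D'.1 →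
      P ((A, C), (B, D)) ((A', C'), (B', D')) = 0 := by
  intro A C A' C' B D B' D' h
  refine Submodule.span_induction ?_ ?_ ?_ ?_ hP
  · rintro X ⟨m₁, m₂, n₁, n₂, rfl⟩
    obtain ⟨A1, A2⟩ := A; obtain ⟨C1, C2⟩ := C; obtain ⟨A1', A2'⟩ := A'
    obtain ⟨C1', C2'⟩ := C'; obtain ⟨B1, B2⟩ := B; obtain ⟨D1, D2⟩ := D
    obtain ⟨B1', B2'⟩ := B'; obtain ⟨D1', D2'⟩ := D'
    simp only [Matrix.kroneckerMap_apply, Matrix.transpose_apply]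
    rcases h with h | h | h | h
    · rw [Matrix.blockDiagonal'_apply_ne _ _ _ h]; ring
    · rw [Matrix.blockDiagonal'_apply_ne _ _ _ (Ne.symm h)]; ring
    · rw [Matrix.blockDiagonal'_apply_ne _ _ _ h]; ring
    · rw [Matrix.blockDiagonal'_apply_ne _ _ _ (Ne.symm h)]; ring
  · rfl
  · intro X Y _ _ hX hY
    simp [Matrix.add_apply, hX, hY]
  · intro c X _ hX
    simp [Matrix.smul_apply, hX]

lemma MM_struct
    {Q : Matrix ((Σ a, da a) × Σ a, da a) ((Σ a, da a) × Σ a, da a) ℂ}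
    (hQ : Q ∈ MM (da := da)) :
    ∀ (u u' v v' : Σ a, da a), u.1 ≠ v.1 ∨ u'.1 ≠ v'.1 → Q (u, u') (v, v') = 0 := by
  intro u u' v v' h
  refine Submodule.span_induction ?_ ?_ ?_ ?_ hQ
  · rintro X ⟨m₁, m₂, rfl⟩
    obtain ⟨u1, u2⟩ := u; obtain ⟨v1, v2⟩ := v
    obtain ⟨w1, w2⟩ := u'; obtain ⟨z1, z2⟩ := v'
    simp only [Matrix.kroneckerMap_apply, Matrix.transpose_apply]
    rcases h with h | h
    · rw [Matrix.blockDiagonal'_apply_ne _ _ _ h]; ring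
    · rw [Matrix.blockDiagonal'_apply_ne _ _ _ (Ne.symm h)]; ring
  · rfl
  · intro X Y _ _ hX hY
    simp [Matrix.add_apply, hX, hY]
  · intro c X _ hX
    simp [Matrix.smul_apply, hX]

end Aux5
lemma pair_ne_or {α γ : Type} {a c : α} {b d : γ} (h : (a, b) ≠ (c, d)) : a ≠ c ∨ b ≠ d := by
  by_contra hc
  push_neg at hc
  exact h (by rw [hc.1, hc.2])

theorem stmt16
    (V : Submodule ℂ (Matrix ((Σ a, da a) × Σ b, db b) ((Σ a, da a) × Σ b, db b) ℂ))
    (hV : IsQMR V)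
    (P : Matrix (((Σ a, da a) × Σ a, da a) × (Σ b, db b) × Σ b, db b)
      (((Σ a, da a) × Σ a, da a) × (Σ b, db b) × Σ b, db b) ℂ)
    (hP₁ : P ∈ MMNN (da := da) (db := db))
    (hP₂ : ∀ S, weaver P S ∈ V ∧ ∀ T ∈ V, hsInner (S - weaver P S) T = 0)
    (Q : Matrix ((Σ a, da a) × Σ a, da a) ((Σ a, da a) × Σ a, da a) ℂ)
    (hQ₁ : Q ∈ MM (da := da))
    (hQ₂ : ∀ S, weaver2 Q S ∈ ptrK (da := da) '' (V : Set (Matrix ((Σ a, da a) × Σ b, db b) ((Σ a, da a) × Σ b, db b) ℂ)) ∧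
      ∀ T ∈ ptrK (da := da) '' (V : Set (Matrix ((Σ a, da a) × Σ b, db b) ((Σ a, da a) × Σ b, db b) ℂ)), hsInner (S - weaver2 Q S) T = 0) :
    IsCP (matOp (APmat P)) ∧
    IsCP (matOp (ASmat (sVmat P))) ∧
    IsCP (matOp (ASmat Q)) ∧
    mulMat (ιa × ιb) (fun p => da p.1 × db p.2) * (APmat P ⊗ₖ APmat P) *
        (mulMat (ιa × ιb) (fun p => da p.1 × db p.2))ᴴ = APmat P ∧
    mulMat ιa da * (ASmat Q ⊗ₖ ASmat Q) * (mulMat ιa da)ᴴ = ASmat Q := by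
  classical
  -- ===== the P side: reindexed projection =====
  set P' := reidx P with hP'def
  have hprojP : P' * P' = P' ∧ P'ᴴ = P' := by
    refine proj_facts P' (V.map vecM) ?_ ?_
    · intro g
      have h' : vecM (weaver P (Matrix.of fun r c => g (r, c))) = P'.mulVec g :=
        weaver_eq_mulVec P _
      rw [← h']
      exact Submodule.mem_map_of_mem (hP₂ _).1
    · intro g t ht
      obtain ⟨T, hT, rfl⟩ := ht
      have e : hsInner ((Matrix.of fun r c => g (r, c)) -
            weaver P (Matrix.of fun r c => g (r, c))) T
          = star (g - P'.mulVec g) ⬝ᵥ vecM T := by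
        rw [hsInner_eq_dot, map_sub, weaver_eq_mulVec]
        rfl
      rw [← e]
      exact (hP₂ _).2 T hT
  have hPpsd : P'.PosSemidef := by
    have := Matrix.posSemidef_conjTranspose_mul_self P'
    rwa [hprojP.2, hprojP.1] at this
  set βP : (Σ a, da a) × (Σ b, db b) → ιa × ιb := fun ξ => (ξ.1.1, ξ.2.1) with hβPdef
  set fP : (Σ p : ιa × ιb, da p.1 × db p.2) → (Σ a, da a) × (Σ b, db b) :=
    fun c => (⟨c.1.1, c.2.1⟩, ⟨c.1.2, c.2.2⟩) with hfPdef
  have hβP : ∀ c, βP (fP c) = c.1 := fun _ => rfl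
  have hfP : Function.Bijective fP := by
    refine Function.bijective_iff_has_inverse.mpr
      ⟨fun ξ => ⟨(ξ.1.1, ξ.2.1), (ξ.1.2, ξ.2.2)⟩, ?_, ?_⟩
    · rintro ⟨⟨a, b⟩, s, u⟩; rfl
    · rintro ⟨⟨a, s⟩, ⟨b, u⟩⟩; rfl
  have hblkP : ∀ u u' v v', βP u ≠ βP v ∨ βP u' ≠ βP v' → P' (u, u') (v, v') = 0 := by
    rintro ⟨x, xu⟩ ⟨x', xu'⟩ ⟨y, yv⟩ ⟨y', yv'⟩ h
    show P ((x, x'), (xu, xu')) ((y, y'), (yv, yv')) = 0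
    apply MMNN_struct hP₁
    rcases h with h | h
    · rcases pair_ne_or h with h' | h'
      · exact Or.inl h'
      · exact Or.inr (Or.inr (Or.inl h'))
    · rcases pair_ne_or h with h' | h'
      · exact Or.inr (Or.inl h')
      · exact Or.inr (Or.inr (Or.inr h'))
  have hAPeq : APmat P = chmat fP P' := by
    ext r c; rfl
  -- ===== the Q side =====
  have hprojQ : Q * Q = Q ∧ Qᴴ = Q := by
    refine proj_facts Q (V.map ((vecM : _ →ₗ[ℂ] _) ∘ₗ ptrKL)) ?_ ?_
    · intro g
      have h' : vecM (weaver2 Q (Matrix.of fun r c => g (r, c))) = Q.mulVec g :=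
        weaver2_eq_mulVec Q _
      obtain ⟨T, hT, hTe⟩ := (hQ₂ (Matrix.of fun r c => g (r, c))).1
      rw [← h', ← hTe]
      exact ⟨T, hT, rfl⟩
    · intro g t ht
      obtain ⟨T, hT, rfl⟩ := ht
      have e : hsInner ((Matrix.of fun r c => g (r, c)) -
            weaver2 Q (Matrix.of fun r c => g (r, c))) (ptrK T)
          = star (g - Q.mulVec g) ⬝ᵥ ((vecM ∘ₗ ptrKL) T) := by
        rw [hsInner_eq_dot, map_sub, weaver2_eq_mulVec]
        rfl
      rw [← e]
      exact (hQ₂ _).2 (ptrK T) ⟨T, hT, rfl⟩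
  have hQpsd : Q.PosSemidef := by
    have := Matrix.posSemidef_conjTranspose_mul_self Q
    rwa [hprojQ.2, hprojQ.1] at this
  have hblkQ : ∀ u u' v v' : Σ a, da a,
      Sigma.fst u ≠ Sigma.fst v ∨ Sigma.fst u' ≠ Sigma.fst v' → Q (u, u') (v, v') = 0 :=
    fun u u' v v' h => MM_struct hQ₁ u u' v v' h
  have hASQ : ASmat Q = chmat (fun c : Σ a, da a => c) Q := by
    ext r c; rfl
  -- ===== the sVmat side =====
  set R₂ : Matrix ((Σ a, da a) × (Σ a, da a)) ((Σ a, da a) × (Σ a, da a)) ℂ :=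
    Matrix.of fun uu' vv' => ∑ w : Σ b, db b, ∑ z : Σ b, db b,
      P ((uu'.1, uu'.2), (w, w)) ((vv'.1, vv'.2), (z, z)) with hR₂def
  have hAS2 : ASmat (sVmat P) = chmat (fun c : Σ a, da a => c) R₂ := by
    ext r c; rfl
  set L : Matrix (((Σ a, da a) × (Σ b, db b)) × ((Σ a, da a) × (Σ b, db b)))
      ((Σ a, da a) × (Σ a, da a)) ℂ :=
    Matrix.of fun ρ uu' => if ρ.1.1 = uu'.1 ∧ ρ.2.1 = uu'.2 ∧ ρ.1.2 = ρ.2.2 then 1 else 0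
    with hLdef
  have hL : R₂ = Lᴴ * P' * L := by
    ext uu' vv'
    obtain ⟨u, u'⟩ := uu'
    obtain ⟨v, v'⟩ := vv'
    rw [Matrix.mul_apply]
    have inner : ∀ σ : ((Σ a, da a) × (Σ b, db b)) × ((Σ a, da a) × (Σ b, db b)),
        (Lᴴ * P') (u, u') σ = ∑ w : Σ b, db b, P' ((u, w), (u', w)) σ := by
      intro σ
      rw [Matrix.mul_apply]
      rw [Fintype.sum_prod_type]
      simp only [Matrix.conjTranspose_apply, hLdef, Matrix.of_apply, Fintype.sum_prod_type,
        apply_ite (star : ℂ → ℂ), star_one, star_zero, ite_and, ite_mul, one_mul, zero_mul,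
        Finset.sum_ite_irrel, Finset.sum_const_zero, Finset.sum_ite_eq, Finset.sum_ite_eq',
        Finset.mem_univ, if_true]
    simp only [inner, Finset.sum_mul]
    rw [Finset.sum_comm]
    show ∑ w : Σ b, db b, ∑ z : Σ b, db b,
        P ((u, u'), (w, w)) ((v, v'), (z, z)) = _
    refine Finset.sum_congr rfl fun w _ => ?_
    rw [Fintype.sum_prod_type]
    simp only [hLdef, Matrix.of_apply, Fintype.sum_prod_type, ite_and, mul_ite, mul_one,
      mul_zero, Finset.sum_ite_irrel, Finset.sum_const_zero, Finset.sum_ite_eq,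
      Finset.sum_ite_eq', Finset.mem_univ, if_true]
    rfl
  have hR₂psd : R₂.PosSemidef := by
    rw [hL]
    exact hPpsd.conjTranspose_mul_mul_same L
  have hblkR₂ : ∀ u u' v v' : Σ a, da a,
      Sigma.fst u ≠ Sigma.fst v ∨ Sigma.fst u' ≠ Sigma.fst v' → R₂ (u, u') (v, v') = 0 := by
    intro u u' v v' h
    show (∑ w : Σ b, db b, ∑ z : Σ b, db b,
      P ((u, u'), (w, w)) ((v, v'), (z, z))) = 0
    refine Finset.sum_eq_zero fun w _ => Finset.sum_eq_zero fun z _ => ?_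
    apply MMNN_struct hP₁
    rcases h with h | h
    · exact Or.inl h
    · exact Or.inr (Or.inl h)
  -- ===== conclude =====
  refine ⟨?_, ?_, ?_, ?_, ?_⟩
  · rw [hAPeq]
    exact isCP_chmat fP βP hβP P' hPpsd hblkP
  · rw [hAS2]
    exact isCP_chmat _ Sigma.fst (fun _ => rfl) R₂ hR₂psd hblkR₂
  · rw [hASQ]
    exact isCP_chmat _ Sigma.fst (fun _ => rfl) Q hQpsd hblkQ
  · rw [hAPeq]
    exact schur_chmat fP hfP βP hβP P' hblkP hprojP.1
  · rw [hASQ]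
    exact schur_chmat _ Function.bijective_id Sigma.fst (fun _ => rfl) Q hblkQ hprojQ.1

end Stmt16
end

section
/- Let V ⊆ B(H) ⊗ B(K) be a decomposable quantum multi-relation on (M, B(K)) with components V₁ ⊆ B(\overline{K}, H) and V₂ ⊆ B(H, \overline{K}), i.e. V = σ(V₁ ⊗ V₂). Let P_{V₁} ∈ M ⊗ N and P_{V₂} ∈ N^op ⊗ M^op be the elements whose Weaver actions π₁(T₁⊗T₂)(S) = T₁ S π_op(T₂) and π₂ orthogonally project B(\overline{K}, H) onto V₁ and B(H, \overline{K}) onto V₂ respectively. Then: (1) σ'(P_{V₁} ⊗ P_{V₂}) = P_V, where σ' : M ⊗ N ⊗ N^op ⊗ M^op → M ⊗ M^op ⊗ N ⊗ N^op swaps tensor components and P_V is the multi-edge indicator of V; and (2) if M is minimally represented on H, then A_{S_V} = A_{P_{V₂}} ∘ A_{P_{V₁}}, where for P_{V₁} = Σ P_i ⊗ Q_i and P_{V₂} = Σ P'_j ⊗ Q'_j one sets A_{P_{V₁}}(m) = Σ tr_H(P_i m) Q_i and A_{P_{V₂}}(n) = Σ tr_K(n P'_j) Q'_j. -/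
/-!
STATEMENT 17: Let `V ⊆ B(H) ⊗ B(K)` be a decomposable quantum multi-relation on
`(M, B(K))` with components `V₁ ⊆ B(conj K, H)` and `V₂ ⊆ B(H, conj K)`, i.e.
`V = σ(V₁ ⊗ V₂)`.  Let `P_{V₁} ∈ M ⊗ N` and `P_{V₂} ∈ N^op ⊗ M^op` be the elements
whose Weaver actions `π₁(T₁⊗T₂)S = T₁ S π_op(T₂)` resp. `π₂(T₃⊗T₄)S = π_op(T₃) S T₄`
orthogonally project `B(conj K, H)` onto `V₁` and `B(H, conj K)` onto `V₂`.  Then: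
(1) `σ'(P_{V₁} ⊗ P_{V₂}) = P_V` (`σ'` the tensor-leg reshuffle, `P_V` the multi-edge
indicator of `V`); and
(2) if `M` is minimally represented (`Z(M) = M'`) then `A_{S_V} = A_{P_{V₂}} ∘ A_{P_{V₁}}`
on `M`, where `A_{P_{V₁}}(m) = Σ tr_H(P_i m) Q_i` and `A_{P_{V₂}}(n) = Σ tr_K(n P'_j) Q'_j`.

Encoding: in coordinates `B(conj K, H) = Matrix H K`, `B(H, conj K) = Matrix K H`,
`σ(T₁ ⊗ T₂)` has entries `(σ(T₁⊗T₂))_{(i,k),(j,l)} = (T₁)_{ik} (T₂)_{lj}`; `M ⊗ N` is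
realized as `span{m ⊗ₖ n}` acting on `Matrix H K` by `S ↦ entrywise contraction`;
`N^op ⊗ M^op` as `span{nᵀ ⊗ₖ mᵀ}` acting on `Matrix K H`; `M⊗M^op⊗N⊗N^op` by 4-leg
Kronecker matrices `(m₁⊗ₖm₂ᵀ)⊗ₖ(n₁⊗ₖn₂ᵀ)` with Weaver action `weaver`; and the
adjacency operators are read off the 2-leg matrices by the displayed entry formulas.
-/

open scoped Kronecker Matrix ComplexOrder

namespace Stmt17

variable {h k : Type} [Fintype h] [DecidableEq h] [Fintype k] [DecidableEq k]

def commutantS (M : StarSubalgebra ℂ (Matrix h h ℂ)) : Set (Matrix h h ℂ) :=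
  {A | ∀ m ∈ M, A * m = m * A}

def centerS (M : StarSubalgebra ℂ (Matrix h h ℂ)) : Set (Matrix h h ℂ) :=
  {z | z ∈ M ∧ ∀ m ∈ M, z * m = m * z}

/-- `σ` on pure tensors: `σ(T₁ ⊗ T₂) ∈ B(H ⊗ K)` for `T₁ ∈ B(conj K, H)`,
`T₂ ∈ B(H, conj K)`. -/
def sigmaP (T₁ : Matrix h k ℂ) (T₂ : Matrix k h ℂ) : Matrix (h × k) (h × k) ℂ :=
  Matrix.of fun p q => T₁ p.1 p.2 * T₂ q.2 q.1

/-- `σ(V₁ ⊗ V₂)`. -/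
noncomputable def sigmaSpan (V₁ : Submodule ℂ (Matrix h k ℂ))
    (V₂ : Submodule ℂ (Matrix k h ℂ)) : Submodule ℂ (Matrix (h × k) (h × k) ℂ) :=
  Submodule.span ℂ {X | ∃ T₁ ∈ V₁, ∃ T₂ ∈ V₂, X = sigmaP T₁ T₂}

/-- The representation `span{m ⊗ₖ n | m ∈ M}` of `M ⊗ N` (`N = B(K)` full). -/
def MN (M : StarSubalgebra ℂ (Matrix h h ℂ)) : Set (Matrix (h × k) (h × k) ℂ) :=
  ↑(Submodule.span ℂ {X | ∃ m ∈ M, ∃ n : Matrix k k ℂ, X = m ⊗ₖ n})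

/-- The representation `span{nᵀ ⊗ₖ mᵀ | m ∈ M}` of `N^op ⊗ M^op`. -/
def NopMop (M : StarSubalgebra ℂ (Matrix h h ℂ)) : Set (Matrix (k × h) (k × h) ℂ) :=
  ↑(Submodule.span ℂ {X | ∃ n : Matrix k k ℂ, ∃ m ∈ M, X = nᵀ ⊗ₖ (m : Matrix h h ℂ)ᵀ})

/-- The 4-leg representation of `M ⊗ M^op ⊗ N ⊗ N^op`. -/
def MMNN (M : StarSubalgebra ℂ (Matrix h h ℂ)) :
    Set (Matrix ((h × h) × k × k) ((h × h) × k × k) ℂ) :=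
  ↑(Submodule.span ℂ
      {X | ∃ m₁ ∈ M, ∃ m₂ ∈ M, ∃ n₁ n₂ : Matrix k k ℂ,
        X = ((m₁ : Matrix h h ℂ) ⊗ₖ (m₂ : Matrix h h ℂ)ᵀ) ⊗ₖ (n₁ ⊗ₖ n₂ᵀ)})

/-- The Weaver action `π₁` of `M ⊗ N` on `B(conj K, H)`:
on `m ⊗ n` and `S` it is `m S π_op(n) = m S nᵀ`. -/
noncomputable def act1 (A : Matrix (h × k) (h × k) ℂ) (S : Matrix h k ℂ) :
    Matrix h k ℂ :=
  Matrix.of fun x u => ∑ x' : h, ∑ u' : k, A (x, u) (x', u') * S x' u'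

/-- The Weaver action `π₂` of `N^op ⊗ M^op` on `B(H, conj K)`:
on `n ⊗ m` it is `S ↦ nᵀ S m`. -/
noncomputable def act2 (B : Matrix (k × h) (k × h) ℂ) (S : Matrix k h ℂ) :
    Matrix k h ℂ :=
  Matrix.of fun u x => ∑ u' : k, ∑ x' : h, B (u, x) (u', x') * S u' x'

/-- The Weaver action of `M ⊗ M^op ⊗ N ⊗ N^op` on `B(H ⊗ K)`. -/
noncomputable def weaver (P : Matrix ((h × h) × k × k) ((h × h) × k × k) ℂ)
    (S : Matrix (h × k) (h × k) ℂ) : Matrix (h × k) (h × k) ℂ :=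
  Matrix.of fun r c =>
    ∑ a : h, ∑ b : h, ∑ u : k, ∑ v : k,
      P ((r.1, c.1), (r.2, c.2)) ((a, b), (u, v)) * S (a, u) (b, v)

/-- Hilbert–Schmidt inner product of (possibly rectangular) matrices. -/
noncomputable def hsInner {d e : Type} [Fintype d] [Fintype e] (A B : Matrix d e ℂ) :
    ℂ :=
  (Aᴴ * B).trace

/-- The tensor-leg reshuffle `σ' : M ⊗ N ⊗ N^op ⊗ M^op → M ⊗ M^op ⊗ N ⊗ N^op` in the
chosen representations. -/
def sigma4 (A : Matrix (h × k) (h × k) ℂ) (B : Matrix (k × h) (k × h) ℂ) :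
    Matrix ((h × h) × k × k) ((h × h) × k × k) ℂ :=
  Matrix.of fun r c =>
    A (r.1.1, r.2.1) (c.1.1, c.2.1) * B (r.2.2, r.1.2) (c.2.2, c.1.2)

/-- `S_V = (id⊗id⊗tr_K)((id⊗id⊗m)(P_V))` read off the 4-leg tensor. -/
noncomputable def sVmat (P : Matrix ((h × h) × k × k) ((h × h) × k × k) ℂ) :
    Matrix (h × h) (h × h) ℂ :=
  Matrix.of fun r c => ∑ u : k, ∑ v : k, P (r, (u, u)) (c, (v, v))

/-- The weighted adjacency operator `A_S(m) = (tr⊗id)(S(m⊗1))` of a 2-leg tensor. -/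
noncomputable def ASfun (S : Matrix (h × h) (h × h) ℂ) (m : Matrix h h ℂ) :
    Matrix h h ℂ :=
  Matrix.of fun x x' => ∑ p : h, ∑ p' : h, S (p, x') (p', x) * m p' p

/-- `A_{P_{V₁}} : M → N^op`, `A_{P_{V₁}}(m) = Σ tr_H(P_i m) Q_i`. -/
noncomputable def A1fun (A : Matrix (h × k) (h × k) ℂ) (m : Matrix h h ℂ) :
    Matrix k k ℂ :=
  Matrix.of fun u u' => ∑ x : h, ∑ x' : h, A (x, u) (x', u') * m x' x

/-- `A_{P_{V₂}} : N^op → M`, `A_{P_{V₂}}(n) = Σ tr_K(n P'_j) Q'_j`. -/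
noncomputable def A2fun (B : Matrix (k × h) (k × h) ℂ) (n : Matrix k k ℂ) :
    Matrix h h ℂ :=
  Matrix.of fun x x' => ∑ u : k, ∑ u' : k, n u u' * B (u, x') (u', x)

end Stmt17

/-!
Reshuffling `S ↦ S.submatrix id Prod.swap` identifies `B(H ⊗ K)` with matrices indexed by
`(h × k) × (k × h)`, i.e. with `B(conj K, H) ⊗ B(H, conj K)`: `σ(T₁ ⊗ T₂)` becomes the
rank-one matrix `vecMulVec T₁ T₂`, and the Weaver action of `σ'(P₁ ⊗ P₂)` becomes
`s ↦ P₁ * s * P₂ᵀ`. That map sends `σ(T₁ ⊗ T₂)` to `σ(π₁(P₁) T₁ ⊗ π₂(P₂) T₂)`, so it maps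
into `σ(V₁ ⊗ V₂)` and fixes it, and it is Hilbert–Schmidt self-adjoint because `P₁` and `P₂`,
the matrices of orthogonal projections, are Hermitian. It is therefore the orthogonal
projection onto `V`; orthogonal projections are unique and the Weaver action is faithful,
so `σ'(P₁ ⊗ P₂) = P_V`. Part (2) is then an identity between index sums.
-/

namespace Stmt17

section HSInner

variable {d e : Type} [Fintype d] [Fintype e]

lemma hsInner_eq_sum (A B : Matrix d e ℂ) :
    hsInner A B = ∑ i, ∑ j, star (A i j) * B i j := by
  simp only [hsInner, Matrix.trace, Matrix.diag, Matrix.mul_apply, Matrix.conjTranspose_apply]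
  exact Finset.sum_comm

lemma star_hsInner (A B : Matrix d e ℂ) : star (hsInner A B) = hsInner B A := by
  rw [hsInner, ← Matrix.trace_conjTranspose, Matrix.conjTranspose_mul,
    Matrix.conjTranspose_conjTranspose, hsInner]

lemma hsInner_self_eq_zero {A : Matrix d e ℂ} : hsInner A A = 0 ↔ A = 0 :=
  Matrix.trace_conjTranspose_mul_self_eq_zero_iff

lemma hsInner_sub_left (A B C : Matrix d e ℂ) :
    hsInner (A - B) C = hsInner A C - hsInner B C := by
  simp only [hsInner, Matrix.conjTranspose_sub, Matrix.sub_mul, Matrix.trace_sub]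

lemma hsInner_add_right (A B C : Matrix d e ℂ) :
    hsInner A (B + C) = hsInner A B + hsInner A C := by
  simp only [hsInner, Matrix.mul_add, Matrix.trace_add]

lemma hsInner_smul_right (c : ℂ) (A B : Matrix d e ℂ) :
    hsInner A (c • B) = c * hsInner A B := by
  simp only [hsInner, Matrix.mul_smul, Matrix.trace_smul, smul_eq_mul]

lemma hsInner_zero_right (A : Matrix d e ℂ) : hsInner A 0 = 0 := by
  simp only [hsInner, Matrix.mul_zero, Matrix.trace_zero]

lemma hsInner_single_right [DecidableEq d] [DecidableEq e] (A : Matrix d e ℂ) (i : d) (j : e) :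
    hsInner A (Matrix.single i j 1) = star (A i j) := by
  simp [hsInner_eq_sum, Matrix.single_apply, ite_and]

lemma hsInner_single_left [DecidableEq d] [DecidableEq e] (A : Matrix d e ℂ) (i : d) (j : e) :
    hsInner (Matrix.single i j 1) A = A i j := by
  rw [← star_hsInner, hsInner_single_right, star_star]

lemma hsInner_mul_mul {d' e' : Type} [Fintype d'] [Fintype e'] (A : Matrix d' d ℂ)
    (S : Matrix d e ℂ) (B : Matrix e e' ℂ) (T : Matrix d' e' ℂ) :
    hsInner (A * S * B) T = hsInner S (Aᴴ * T * Bᴴ) := by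
  simp only [hsInner, Matrix.conjTranspose_mul, Matrix.mul_assoc]
  rw [Matrix.trace_mul_comm, Matrix.mul_assoc, Matrix.mul_assoc]

lemma hsInner_submatrix_swap {f : Type} [Fintype f] (A : Matrix d (e × f) ℂ)
    (B : Matrix d (f × e) ℂ) :
    hsInner (A.submatrix id Prod.swap) B = hsInner A (B.submatrix id Prod.swap) := by
  simp only [hsInner_eq_sum, Matrix.submatrix_apply, id]
  exact Finset.sum_congr rfl fun i _ =>
    Fintype.sum_equiv (Equiv.prodComm f e) _ _ fun _ => rfl

end HSInner

def IsHSProjection {d e : Type} [Fintype d] [Fintype e] (f : Matrix d e ℂ → Matrix d e ℂ)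
    (W : Submodule ℂ (Matrix d e ℂ)) : Prop :=
  ∀ S, f S ∈ W ∧ ∀ T ∈ W, hsInner (S - f S) T = 0

namespace IsHSProjection

variable {d e : Type} [Fintype d] [Fintype e] {f g : Matrix d e ℂ → Matrix d e ℂ}
  {W : Submodule ℂ (Matrix d e ℂ)}

lemma map_eq_self (hf : IsHSProjection f W) {T : Matrix d e ℂ} (hT : T ∈ W) : f T = T := by
  have h := (hf T).2 _ (W.sub_mem hT (hf T).1)
  exact (sub_eq_zero.mp (hsInner_self_eq_zero.mp h)).symm

lemma hsInner_map_left (hf : IsHSProjection f W) (S T : Matrix d e ℂ) :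
    hsInner (f S) T = hsInner S (f T) := by
  have key : ∀ S T, hsInner S (f T) = hsInner (f S) (f T) := fun S T =>
    sub_eq_zero.mp (hsInner_sub_left S (f S) (f T) ▸ (hf S).2 _ (hf T).1)
  rw [← star_hsInner, key T S, star_hsInner, ← key]

lemma eq (hf : IsHSProjection f W) (hg : IsHSProjection g W) : f = g := by
  funext S
  have hmem : f S - g S ∈ W := W.sub_mem (hf S).1 (hg S).1
  have h : hsInner ((S - g S) - (S - f S)) (f S - g S) = 0 := by
    rw [hsInner_sub_left, (hg S).2 _ hmem, (hf S).2 _ hmem, sub_zero]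
  rw [sub_sub_sub_cancel_left] at h
  exact sub_eq_zero.mp (hsInner_self_eq_zero.mp h)

end IsHSProjection

lemma isHSProjection_span {d e : Type} [Fintype d] [Fintype e]
    {f : Matrix d e ℂ → Matrix d e ℂ} {s : Set (Matrix d e ℂ)}
    (hrange : ∀ S, f S ∈ Submodule.span ℂ s) (hadj : ∀ S T, hsInner (f S) T = hsInner S (f T))
    (hfix : ∀ T ∈ s, f T = T) : IsHSProjection f (Submodule.span ℂ s) := by
  refine fun S => ⟨hrange S, fun T hT => ?_⟩
  induction hT using Submodule.span_induction with
  | mem T hT => rw [hsInner_sub_left, hadj, hfix T hT, sub_self]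
  | zero => exact hsInner_zero_right _
  | add T T' _ _ h h' => rw [hsInner_add_right, h, h', add_zero]
  | smul c T _ h => rw [hsInner_smul_right, h, mul_zero]

section Actions

variable {h k : Type}

lemma sigmaP_submatrix_swap (T₁ : Matrix h k ℂ) (T₂ : Matrix k h ℂ) :
    (sigmaP T₁ T₂).submatrix id Prod.swap =
      Matrix.vecMulVec (fun i => T₁ i.1 i.2) (fun j => T₂ j.1 j.2) := by
  ext; rfl

lemma single_eq_sigmaP [DecidableEq h] [DecidableEq k] (a b : h) (p q : k) (c : ℂ) :
    Matrix.single (a, p) (b, q) c = sigmaP (Matrix.single a p c) (Matrix.single q b 1) := by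
  ext ⟨x, u⟩ ⟨y, v⟩
  simp only [sigmaP, Matrix.of_apply, Matrix.single_apply, Prod.mk.injEq]
  split_ifs <;> simp_all

variable [Fintype h] [Fintype k]

lemma act2_eq_act1 (B : Matrix (k × h) (k × h) ℂ) : act2 B = act1 B := rfl

lemma act1_apply_eq_mulVec (A : Matrix (h × k) (h × k) ℂ) (T : Matrix h k ℂ) (x : h)
    (u : k) :
    act1 A T x u = (A *ᵥ fun i => T i.1 i.2) (x, u) := by
  simp [act1, Matrix.mulVec, dotProduct, Fintype.sum_prod_type]

lemma weaver_sigma4 (A : Matrix (h × k) (h × k) ℂ) (B : Matrix (k × h) (k × h) ℂ)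
    (S : Matrix (h × k) (h × k) ℂ) :
    weaver (sigma4 A B) S = (A * S.submatrix id Prod.swap * Bᵀ).submatrix id Prod.swap := by
  ext ⟨x, u⟩ ⟨y, v⟩
  simp only [weaver, sigma4, Matrix.mul_apply, Fintype.sum_prod_type, Finset.sum_mul,
    Matrix.of_apply, Matrix.submatrix_apply, id, Matrix.transpose_apply, Prod.swap_prod_mk]
  simp_rw [Finset.sum_comm (γ := h) (α := k)]
  rw [Finset.sum_comm]
  refine Finset.sum_congr rfl fun q _ => Finset.sum_congr rfl fun p _ => ?_
  rw [Finset.sum_comm]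
  simp only [mul_right_comm]

lemma weaver_sigma4_sigmaP (A : Matrix (h × k) (h × k) ℂ) (B : Matrix (k × h) (k × h) ℂ)
    (T₁ : Matrix h k ℂ) (T₂ : Matrix k h ℂ) :
    weaver (sigma4 A B) (sigmaP T₁ T₂) = sigmaP (act1 A T₁) (act2 B T₂) := by
  rw [weaver_sigma4, sigmaP_submatrix_swap, Matrix.mul_vecMulVec, Matrix.vecMulVec_mul,
    Matrix.vecMul_transpose, act2_eq_act1]
  ext ⟨x, u⟩ ⟨y, v⟩
  simp only [Matrix.submatrix_apply, id, Matrix.vecMulVec_apply, sigmaP, Matrix.of_apply,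
    act1_apply_eq_mulVec, Prod.swap_prod_mk]

lemma hsInner_weaver_sigma4 (A : Matrix (h × k) (h × k) ℂ) (B : Matrix (k × h) (k × h) ℂ)
    (S T : Matrix (h × k) (h × k) ℂ) :
    hsInner (weaver (sigma4 A B) S) T = hsInner S (weaver (sigma4 Aᴴ Bᴴ) T) := by
  rw [weaver_sigma4, weaver_sigma4, hsInner_submatrix_swap, hsInner_mul_mul,
    Matrix.conjTranspose_transpose, ← hsInner_submatrix_swap]
  rfl

noncomputable def weaverLinearMap (R : Matrix ((h × h) × k × k) ((h × h) × k × k) ℂ) :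
    Matrix (h × k) (h × k) ℂ →ₗ[ℂ] Matrix (h × k) (h × k) ℂ where
  toFun := weaver R
  map_add' S T := by
    ext
    simp only [weaver, Matrix.of_apply, Matrix.add_apply, mul_add, Finset.sum_add_distrib]
  map_smul' c S := by
    ext
    simp only [weaver, Matrix.of_apply, Matrix.smul_apply, smul_eq_mul, Finset.mul_sum,
      RingHom.id_apply, mul_left_comm]

lemma ASfun_sVmat_sigma4 (A : Matrix (h × k) (h × k) ℂ) (B : Matrix (k × h) (k × h) ℂ)
    (m : Matrix h h ℂ) : ASfun (sVmat (sigma4 A B)) m = A2fun B (A1fun A m) := by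
  ext x x'
  simp only [ASfun, sVmat, sigma4, A2fun, A1fun, Matrix.of_apply, Finset.sum_mul]
  rw [Finset.sum_comm_cycle]
  refine Finset.sum_congr rfl fun u _ => ?_
  rw [Finset.sum_comm_cycle]
  simp only [mul_right_comm]

variable [DecidableEq h] [DecidableEq k]

lemma act1_single (A : Matrix (h × k) (h × k) ℂ) (a : h) (p : k) (x : h) (u : k) :
    act1 A (Matrix.single a p 1) x u = A (x, u) (a, p) := by
  simp [act1, Matrix.single_apply, ite_and]

lemma IsHSProjection.isHermitian {A : Matrix (h × k) (h × k) ℂ}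
    {V : Submodule ℂ (Matrix h k ℂ)} (hA : IsHSProjection (act1 A) V) : A.IsHermitian := by
  ext ⟨x, u⟩ ⟨a, p⟩
  simpa [hsInner_single_left, hsInner_single_right, act1_single] using
    hA.hsInner_map_left (Matrix.single x u 1) (Matrix.single a p 1)

lemma sigmaSpan_top_top : sigmaSpan (⊤ : Submodule ℂ (Matrix h k ℂ)) ⊤ = ⊤ := by
  refine eq_top_iff.mpr fun S _ => ?_
  rw [Matrix.matrix_eq_sum_single S]
  refine Submodule.sum_mem _ fun ⟨a, p⟩ _ => Submodule.sum_mem _ fun ⟨b, q⟩ _ => ?_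
  rw [single_eq_sigmaP]
  exact Submodule.subset_span ⟨_, trivial, _, trivial, rfl⟩

lemma weaver_sigma4_mem_sigmaSpan {A : Matrix (h × k) (h × k) ℂ}
    {B : Matrix (k × h) (k × h) ℂ} {V₁ : Submodule ℂ (Matrix h k ℂ)}
    {V₂ : Submodule ℂ (Matrix k h ℂ)}
    (hA : ∀ T, act1 A T ∈ V₁) (hB : ∀ T, act2 B T ∈ V₂) (S : Matrix (h × k) (h × k) ℂ) :
    weaver (sigma4 A B) S ∈ sigmaSpan V₁ V₂ := by
  have hspan : sigmaSpan ⊤ ⊤ ≤ (sigmaSpan V₁ V₂).comap (weaverLinearMap (sigma4 A B)) :=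
    Submodule.span_le.mpr fun _ ⟨T₁, _, T₂, _, hX⟩ => hX ▸ Submodule.subset_span
      ⟨_, hA T₁, _, hB T₂, weaver_sigma4_sigmaP A B T₁ T₂⟩
  exact hspan (by rw [sigmaSpan_top_top]; exact Submodule.mem_top)

lemma isHSProjection_weaver_sigma4 {A : Matrix (h × k) (h × k) ℂ}
    {B : Matrix (k × h) (k × h) ℂ} {V₁ : Submodule ℂ (Matrix h k ℂ)}
    {V₂ : Submodule ℂ (Matrix k h ℂ)}
    (hA : IsHSProjection (act1 A) V₁) (hB : IsHSProjection (act2 B) V₂) :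
    IsHSProjection (weaver (sigma4 A B)) (sigmaSpan V₁ V₂) := by
  refine isHSProjection_span
    (weaver_sigma4_mem_sigmaSpan (fun T => (hA T).1) fun T => (hB T).1)
    (fun S T => ?_) ?_
  · rw [hsInner_weaver_sigma4, hA.isHermitian.eq, (act2_eq_act1 B ▸ hB :).isHermitian.eq]
  · rintro _ ⟨T₁, hT₁, T₂, hT₂, rfl⟩
    rw [weaver_sigma4_sigmaP, hA.map_eq_self hT₁, hB.map_eq_self hT₂]

lemma weaver_single (R : Matrix ((h × h) × k × k) ((h × h) × k × k) ℂ) (a b : h) (p q : k)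
    (x y : h) (u v : k) :
    weaver R (Matrix.single (a, p) (b, q) 1) (x, u) (y, v) =
      R ((x, y), (u, v)) ((a, b), (p, q)) := by
  simp [weaver, Matrix.single_apply, ite_and]

lemma weaver_injective :
    Function.Injective (weaver : Matrix ((h × h) × k × k) ((h × h) × k × k) ℂ → _) := by
  intro R R' hRR'
  ext ⟨⟨x, y⟩, u, v⟩ ⟨⟨a, b⟩, p, q⟩
  simpa only [weaver_single] using
    congrFun (congrFun (congrFun hRR' (Matrix.single (a, p) (b, q) 1)) (x, u)) (y, v)

end Actions

variable {h k : Type} [Fintype h] [DecidableEq h] [Fintype k] [DecidableEq k]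

theorem stmt17_general
    (M : StarSubalgebra ℂ (Matrix h h ℂ))
    (V₁ : Submodule ℂ (Matrix h k ℂ)) (V₂ : Submodule ℂ (Matrix k h ℂ))
    (V : Submodule ℂ (Matrix (h × k) (h × k) ℂ))
    (hdec : V = sigmaSpan V₁ V₂)
    (P₁ : Matrix (h × k) (h × k) ℂ)
    (hP₁proj : ∀ S, act1 P₁ S ∈ V₁ ∧ ∀ T ∈ V₁, hsInner (S - act1 P₁ S) T = 0)
    (P₂ : Matrix (k × h) (k × h) ℂ)
    (hP₂proj : ∀ S, act2 P₂ S ∈ V₂ ∧ ∀ T ∈ V₂, hsInner (S - act2 P₂ S) T = 0)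
    (P : Matrix ((h × h) × k × k) ((h × h) × k × k) ℂ)
    (hPproj : ∀ S, weaver P S ∈ V ∧ ∀ T ∈ V, hsInner (S - weaver P S) T = 0) :
    sigma4 P₁ P₂ = P ∧
    (centerS M = commutantS M →
      ∀ m ∈ M, ASfun (sVmat P) m = A2fun P₂ (A1fun P₁ m)) := by
  subst hdec
  have hP : sigma4 P₁ P₂ = P :=
    weaver_injective ((isHSProjection_weaver_sigma4 hP₁proj hP₂proj).eq hPproj)
  exact ⟨hP, fun _ m _ => hP ▸ ASfun_sVmat_sigma4 P₁ P₂ m⟩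

theorem stmt17
    (M : StarSubalgebra ℂ (Matrix h h ℂ))
    (V₁ : Submodule ℂ (Matrix h k ℂ)) (V₂ : Submodule ℂ (Matrix k h ℂ))
    (V : Submodule ℂ (Matrix (h × k) (h × k) ℂ))
    (hdec : V = sigmaSpan V₁ V₂)
    (hbimod : ∀ A ∈ commutantS M, ∀ T ∈ V,
      (A ⊗ₖ (1 : Matrix k k ℂ)) * T ∈ V ∧ T * (A ⊗ₖ (1 : Matrix k k ℂ)) ∈ V)
    (P₁ : Matrix (h × k) (h × k) ℂ) (hP₁mem : P₁ ∈ MN M)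
    (hP₁proj : ∀ S, act1 P₁ S ∈ V₁ ∧ ∀ T ∈ V₁, hsInner (S - act1 P₁ S) T = 0)
    (P₂ : Matrix (k × h) (k × h) ℂ) (hP₂mem : P₂ ∈ NopMop (k := k) M)
    (hP₂proj : ∀ S, act2 P₂ S ∈ V₂ ∧ ∀ T ∈ V₂, hsInner (S - act2 P₂ S) T = 0)
    (P : Matrix ((h × h) × k × k) ((h × h) × k × k) ℂ) (hPmem : P ∈ MMNN (k := k) M)
    (hPproj : ∀ S, weaver P S ∈ V ∧ ∀ T ∈ V, hsInner (S - weaver P S) T = 0) :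
    sigma4 P₁ P₂ = P ∧
    (centerS M = commutantS M →
      ∀ m ∈ M, ASfun (sVmat P) m = A2fun P₂ (A1fun P₁ m)) :=
  stmt17_general M V₁ V₂ V hdec P₁ hP₁proj P₂ hP₂proj P hPproj

end Stmt17
end
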